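/- arXiv:2103.09791 — 2 statements merged into one kernel-verified Lean document; each statement's English description precedes it below -/
import Mathlib

section
/- OS-ELM computes the batch least-squares solution: under the OS-ELM recursion with targets, for every i ≥ 0 the weight matrix satisfies β_i = P_i · (H₀ᵀT₀ + Σ_{j=1}^{i} h_jᵀt_j); that is, the online solution after i training steps equals the solution (H₀ᵀH₀ + Σ_{j=1}^{i} h_jᵀh_j)⁻¹(H₀ᵀT₀ + Σ_{j=1}^{i} h_jᵀt_j) computed from all data seen so far. -/
open Matrix

/-!
The online recursion is the recursive least-squares update. With
`Q i = H₀ᵀH₀ + Σ_{1 ≤ j ≤ i} h_jᵀh_j` and `S i = H₀ᵀT₀ + Σ_{1 ≤ j ≤ i} h_jᵀt_j`, every `Q i` is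
positive definite (a positive definite matrix plus Gram matrices), hence invertible, so
`P i = (Q i)⁻¹`. If `β = Q⁻¹ S`, then multiplying the update `β + (Q + hᵀh)⁻¹ hᵀ (t - h β)` by
`Q + hᵀh` gives `Q β + hᵀh β + hᵀt - hᵀh β = S + hᵀt`, which is the claim at the next step.
-/

section RecursiveLeastSquares

variable {n k p R : Type*} [Fintype n] [DecidableEq n] [Fintype k] [CommRing R]

theorem rls_update_eq_inv_mul {A : Matrix n n R} {H : Matrix k n R}
    (S : Matrix n p R) (T : Matrix k p R) (hA : IsUnit A.det) (hAH : IsUnit (A + Hᵀ * H).det) :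
    A⁻¹ * S + (A + Hᵀ * H)⁻¹ * Hᵀ * (T - H * (A⁻¹ * S)) = (A + Hᵀ * H)⁻¹ * (S + Hᵀ * T) := by
  set M := A + Hᵀ * H
  have hMβ : M * (A⁻¹ * S) = S + Hᵀ * H * (A⁻¹ * S) := by
    rw [Matrix.add_mul, mul_nonsing_inv_cancel_left _ _ hA]
  calc A⁻¹ * S + M⁻¹ * Hᵀ * (T - H * (A⁻¹ * S))
      = M⁻¹ * (M * (A⁻¹ * S) + Hᵀ * (T - H * (A⁻¹ * S))) := by
        rw [Matrix.mul_add, nonsing_inv_mul_cancel_left _ _ hAH, Matrix.mul_assoc]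
    _ = M⁻¹ * (S + Hᵀ * T) := by
        rw [hMβ, Matrix.mul_sub, Matrix.mul_assoc, add_add_sub_cancel]

variable {Q P : ℕ → Matrix n n R} {S β : ℕ → Matrix n p R}
  {h : ℕ → Matrix k n R} {t : ℕ → Matrix k p R}

theorem rls_cov_eq_inv (hQ : ∀ i, Q (i + 1) = Q i + (h (i + 1))ᵀ * h (i + 1))
    (hQu : ∀ i, IsUnit (Q i).det) (hP0 : P 0 = (Q 0)⁻¹)
    (hP : ∀ i, P (i + 1) = ((P i)⁻¹ + (h (i + 1))ᵀ * h (i + 1))⁻¹) (i : ℕ) :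
    P i = (Q i)⁻¹ := by
  induction i with
  | zero => exact hP0
  | succ i ih => rw [hP, ih, nonsing_inv_nonsing_inv _ (hQu i), hQ]

theorem rls_coef_eq_inv_mul (hQ : ∀ i, Q (i + 1) = Q i + (h (i + 1))ᵀ * h (i + 1))
    (hS : ∀ i, S (i + 1) = S i + (h (i + 1))ᵀ * t (i + 1))
    (hQu : ∀ i, IsUnit (Q i).det) (hPQ : ∀ i, P i = (Q i)⁻¹) (hβ0 : β 0 = (Q 0)⁻¹ * S 0)
    (hβ : ∀ i, β (i + 1) = β i + P (i + 1) * (h (i + 1))ᵀ * (t (i + 1) - h (i + 1) * β i))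
    (i : ℕ) : β i = (Q i)⁻¹ * S i := by
  induction i with
  | zero => exact hβ0
  | succ i ih =>
    have hQu' := hQu (i + 1)
    rw [hQ] at hQu'
    rw [hβ, ih, hPQ, hQ, hS, rls_update_eq_inv_mul _ _ (hQu i) hQu']

end RecursiveLeastSquares

theorem posSemidef_transpose_mul_self_real {k n : Type*} [Fintype k] [Fintype n]
    (A : Matrix k n ℝ) : (Aᵀ * A).PosSemidef := by
  simpa using posSemidef_conjTranspose_mul_self A

theorem posDef_transpose_mul_self_add_sum {N₀ k n ι : Type*} [Fintype N₀] [Fintype k] [Fintype n]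
    [DecidableEq n] {H₀ : Matrix N₀ n ℝ} (hH₀ : IsUnit (H₀ᵀ * H₀))
    (h : ι → Matrix k n ℝ) (s : Finset ι) :
    (H₀ᵀ * H₀ + ∑ j ∈ s, (h j)ᵀ * h j).PosDef :=
  ((posSemidef_transpose_mul_self_real H₀).posDef_iff_isUnit.mpr hH₀).add_posSemidef
    (posSemidef_sum s fun j _ => posSemidef_transpose_mul_self_real (h j))

/-- OS-ELM computes the batch least-squares solution: under the OS-ELM
recursion with targets, for every i ≥ 0 the weight matrix satisfies
β_i = P_i · (H₀ᵀT₀ + Σ_{j=1}^{i} h_jᵀt_j). -/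
theorem oselm_beta_closed_form {N₀ Nh m : ℕ}
    (H₀ : Matrix (Fin N₀) (Fin Nh) ℝ) (hinv : IsUnit (H₀ᵀ * H₀))
    (T₀ : Matrix (Fin N₀) (Fin m) ℝ)
    (h : ℕ → Matrix (Fin 1) (Fin Nh) ℝ)
    (t : ℕ → Matrix (Fin 1) (Fin m) ℝ)
    (P : ℕ → Matrix (Fin Nh) (Fin Nh) ℝ)
    (β : ℕ → Matrix (Fin Nh) (Fin m) ℝ)
    (hP0 : P 0 = (H₀ᵀ * H₀)⁻¹)
    (hPrec : ∀ i, 1 ≤ i → P i = ((P (i - 1))⁻¹ + (h i)ᵀ * h i)⁻¹)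
    (hβ0 : β 0 = P 0 * H₀ᵀ * T₀)
    (hβrec : ∀ i, 1 ≤ i →
      β i = β (i - 1) + P i * (h i)ᵀ * (t i - h i * β (i - 1))) :
    ∀ i, β i = P i * (H₀ᵀ * T₀ + ∑ j ∈ Finset.Icc 1 i, (h j)ᵀ * t j) := by
  set Q := fun i => H₀ᵀ * H₀ + ∑ j ∈ Finset.Icc 1 i, (h j)ᵀ * h j
  set S := fun i => H₀ᵀ * T₀ + ∑ j ∈ Finset.Icc 1 i, (h j)ᵀ * t j
  have hQ : ∀ i, Q (i + 1) = Q i + (h (i + 1))ᵀ * h (i + 1) := fun i => by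
    simp only [Q, Finset.sum_Icc_succ_top (Nat.le_add_left 1 i), add_assoc]
  have hS : ∀ i, S (i + 1) = S i + (h (i + 1))ᵀ * t (i + 1) := fun i => by
    simp only [S, Finset.sum_Icc_succ_top (Nat.le_add_left 1 i), add_assoc]
  have hQu : ∀ i, IsUnit (Q i).det := fun i =>
    (isUnit_iff_isUnit_det _).mp (posDef_transpose_mul_self_add_sum hinv h _).isUnit
  have hPQ := rls_cov_eq_inv hQ hQu (by simpa [Q] using hP0)
    fun i => by simpa using hPrec (i + 1) (by omega)
  have hβQ := rls_coef_eq_inv_mul (β := β) hQ hS hQu hPQ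
    (by simp [Q, S, hβ0, hP0, Matrix.mul_assoc]) fun i => by simpa using hβrec (i + 1) (by omega)
  intro i
  rw [hβQ, hPQ]
end

section
/- Soundness of affine-arithmetic multiplication: let x₀,…,x_n and y₀,…,y_n be real numbers, let ε ∈ [−1,1]ⁿ, and set x = x₀ + Σ_{i=1}^{n} x_iε_i and y = y₀ + Σ_{i=1}^{n} y_iε_i. Then there exists ε* ∈ [−1,1] such that x·y = x₀y₀ + Σ_{i=1}^{n}(x₀y_i + y₀x_i)ε_i + u·v·ε*, where u = Σ_{i=1}^{n}|x_i| and v = Σ_{i=1}^{n}|y_i|. -/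
/-!
The product splits exactly into x₀y₀, the linear part, and the remainder
Q = (Σ xᵢεᵢ)(Σ yᵢεᵢ). Since |εᵢ| ≤ 1, each factor of Q is bounded by u resp. v,
so |Q| ≤ uv and ε* = Q/(uv) works (ε* = 0 when uv = 0, as then Q = 0).
-/

open Finset

section

variable {ι R : Type*} [Field R] [LinearOrder R] [IsStrictOrderedRing R]

theorem abs_sum_mul_le_sum_abs_of_abs_le_one (s : Finset ι) (z ε : ι → R)
    (hε : ∀ i ∈ s, |ε i| ≤ 1) : |∑ i ∈ s, z i * ε i| ≤ ∑ i ∈ s, |z i| :=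
  calc |∑ i ∈ s, z i * ε i| ≤ ∑ i ∈ s, |z i * ε i| := abs_sum_le_sum_abs _ _
    _ ≤ ∑ i ∈ s, |z i| := sum_le_sum fun i hi => by
      rw [abs_mul]
      exact mul_le_of_le_one_right (abs_nonneg _) (hε i hi)

theorem exists_mem_Icc_eq_mul_of_abs_le {q M : R} (h : |q| ≤ M) :
    ∃ t ∈ Set.Icc (-1 : R) 1, q = M * t := by
  rcases (abs_nonneg q |>.trans h).eq_or_lt with hM | hM
  · exact ⟨0, by simp, by simpa [← hM] using h⟩
  · refine ⟨q / M, ⟨?_, ?_⟩, (mul_div_cancel₀ q hM.ne').symm⟩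
    · rw [le_div_iff₀ hM]; linarith [neg_abs_le q]
    · rw [div_le_one hM]; exact (le_abs_self q).trans h

end

/-- Soundness of affine-arithmetic multiplication: if x = x₀ + Σᵢ xᵢεᵢ and
y = y₀ + Σᵢ yᵢεᵢ with each εᵢ ∈ [−1,1], then there exists ε* ∈ [−1,1] with
x·y = x₀y₀ + Σᵢ(x₀yᵢ + y₀xᵢ)εᵢ + uvε*, where u = Σᵢ|xᵢ|, v = Σᵢ|yᵢ|. -/
theorem affine_mul_sound {n : ℕ} (x₀ y₀ : ℝ) (x y ε : Fin n → ℝ)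
    (hε : ∀ i, ε i ∈ Set.Icc (-1 : ℝ) 1) :
    ∃ εstar ∈ Set.Icc (-1 : ℝ) 1,
      (x₀ + ∑ i, x i * ε i) * (y₀ + ∑ i, y i * ε i) =
        x₀ * y₀ + (∑ i, (x₀ * y i + y₀ * x i) * ε i) +
          (∑ i, |x i|) * (∑ i, |y i|) * εstar := by
  have hε' : ∀ i ∈ univ, |ε i| ≤ 1 := fun i _ => abs_le.mpr (hε i)
  have hQ : |(∑ i, x i * ε i) * ∑ i, y i * ε i| ≤ (∑ i, |x i|) * ∑ i, |y i| := by
    rw [abs_mul]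
    exact mul_le_mul (abs_sum_mul_le_sum_abs_of_abs_le_one _ x ε hε')
      (abs_sum_mul_le_sum_abs_of_abs_le_one _ y ε hε') (abs_nonneg _)
      ((abs_nonneg _).trans (abs_sum_mul_le_sum_abs_of_abs_le_one _ x ε hε'))
  obtain ⟨t, ht, hQt⟩ := exists_mem_Icc_eq_mul_of_abs_le hQ
  have hlin : ∑ i, (x₀ * y i + y₀ * x i) * ε i
      = x₀ * ∑ i, y i * ε i + y₀ * ∑ i, x i * ε i := by
    simp only [mul_sum, ← sum_add_distrib, add_mul, mul_assoc]
  refine ⟨t, ht, ?_⟩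
  rw [hlin, ← hQt]
  ring
end
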